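/- arXiv:1011.3995 — 4 statements merged into one kernel-verified Lean document; each statement's English description precedes it below -/
import Mathlib

section
/- Converse of the shifting lemma. Let f be a continuous even probability density on ℝ, positive on an open interval (−b₀, b₀) and zero outside, and let μ be the measure with density f. Suppose μ has the shifting property: for all reals a < b with a + b ≥ 0 and all reals a ≤ a' < b' with μ((a,b)) = μ((a',b')), one has f(a) + f(b) ≥ f(a') + f(b'); and for all reals a < b with a + b ≤ 0 and all reals a' < b' ≤ b with μ((a,b)) = μ((a',b')), one has f(a) + f(b) ≥ f(a') + f(b'). Then μ is log-concave; equivalently, the function J_μ is concave on (0,1). -/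
/-!
With `F` the distribution function, `μ (Ioo (Finv r) (Finv s)) = s - r`, so the left shifting
property reads `J t + J (t + p) ≤ J t' + J (t' + p)` for `t ≤ t'` and `2 t' + p ≤ 1`. Together with
the symmetry `J (1 - r) = J r` inherited from `f` this makes `J` midpoint concave, hence concave
since it is continuous. On the support, `f = J ∘ F` and `F' = f`, so the right derivative of
`log f` at `x` is the right derivative of `J` at `F x`; this is antitone because `J` is concave and
`F` is monotone, and a continuous function with antitone right derivative is concave.
-/

open MeasureTheory Set Filter Topology
open scoped ENNReal

noncomputable def densMeasure (f : ℝ → ℝ) : Measure ℝ :=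
  MeasureTheory.volume.withDensity (fun x => ENNReal.ofReal (f x))

open ProbabilityTheory

lemma concaveOn_of_forall_le_affine {s : Set ℝ} {φ : ℝ → ℝ} (hs : Convex ℝ s)
    (h : ∀ x₀ ∈ s, ∃ c, ∀ x ∈ s, φ x ≤ φ x₀ + c * (x - x₀)) : ConcaveOn ℝ s φ := by
  refine ⟨hs, fun x hx y hy a b ha hb hab => ?_⟩
  obtain ⟨c, hc⟩ := h _ (hs hx hy ha hb hab)
  have hxc := mul_le_mul_of_nonneg_left (hc x hx) ha
  have hyc := mul_le_mul_of_nonneg_left (hc y hy) hb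
  simp only [smul_eq_mul] at *
  linear_combination hxc + hyc + (φ (a * x + b * y) - c * (a * x + b * y)) * hab

lemma le_of_hasDerivWithinAt_Ici_nonpos {g g' : ℝ → ℝ} {a b : ℝ} (hab : a ≤ b)
    (hc : ContinuousOn g (Icc a b)) (hd : ∀ x ∈ Ico a b, HasDerivWithinAt g (g' x) (Ici x) x)
    (hg' : ∀ x ∈ Ico a b, g' x ≤ 0) : g b ≤ g a :=
  image_le_of_deriv_right_le_deriv_boundary (B := fun _ => g a) hc hd le_rfl continuousOn_const
    (fun x _ => hasDerivWithinAt_const x _ (g a)) hg' ⟨hab, le_rfl⟩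

lemma AntitoneOn.concaveOn_of_hasDerivWithinAt_Ici {s : Set ℝ} {φ φ' : ℝ → ℝ}
    (hφ' : AntitoneOn φ' s) (hs : Convex ℝ s) (hφ : ContinuousOn φ s)
    (hd : ∀ x ∈ s, HasDerivWithinAt φ (φ' x) (Ici x) x) : ConcaveOn ℝ s φ := by
  refine concaveOn_of_forall_le_affine hs fun x₀ hx₀ => ⟨φ' x₀, fun x hx => ?_⟩
  rcases le_total x₀ x with hle | hle
  · have hsub : Icc x₀ x ⊆ s := hs.ordConnected.out hx₀ hx
    have := le_of_hasDerivWithinAt_Ici_nonpos (g := fun u => φ u - φ' x₀ * u) hle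
      ((hφ.mono hsub).sub (continuousOn_const.mul continuousOn_id))
      (fun u hu => (hd u (hsub (Ico_subset_Icc_self hu))).sub
        ((hasDerivWithinAt_id u _).const_mul _))
      (fun u hu => by
        have := hφ' hx₀ (hsub (Ico_subset_Icc_self hu)) hu.1
        simp only [mul_one]; linarith)
    linarith
  · have hsub : Icc x x₀ ⊆ s := hs.ordConnected.out hx hx₀
    have := le_of_hasDerivWithinAt_Ici_nonpos (g := fun u => φ' x₀ * u - φ u) hle
      ((continuousOn_const.mul continuousOn_id).sub (hφ.mono hsub))
      (fun u hu => ((hasDerivWithinAt_id u _).const_mul _).sub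
        (hd u (hsub (Ico_subset_Icc_self hu))))
      (fun u hu => by
        have := hφ' (hsub (Ico_subset_Icc_self hu)) hx₀ hu.2.le
        simp only [mul_one]; linarith)
    linarith

lemma nonneg_of_midpoint_concave {g : ℝ → ℝ} {x z : ℝ} (hg : ContinuousOn g (Icc x z))
    (hmid : ∀ a ∈ Icc x z, ∀ b ∈ Icc x z, g a + g b ≤ 2 * g ((a + b) / 2))
    (hx : 0 ≤ g x) (hz : 0 ≤ g z) : ∀ y ∈ Icc x z, 0 ≤ g y := by
  by_contra! ⟨y, hy, hgy⟩
  obtain ⟨t, ht, hmin⟩ := isCompact_Icc.exists_isMinOn ⟨y, hy⟩ hg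
  -- the least minimiser is the midpoint of a pair in `[x, z]` whose left point is not a minimiser
  have hM : IsCompact (Icc x z ∩ g ⁻¹' {g t}) := isCompact_Icc.of_isClosed_subset
    (hg.preimage_isClosed_of_isClosed isClosed_Icc isClosed_singleton) inter_subset_left
  obtain ⟨t₀, ⟨ht₀, ht₀min : g t₀ = g t⟩, hleast⟩ := hM.exists_isLeast ⟨t, ht, rfl⟩
  have hgt : g t < 0 := (hmin hy).trans_lt hgy
  have hxt₀ : x < t₀ := lt_of_le_of_ne ht₀.1 (by rintro rfl; linarith)
  have ht₀z : t₀ < z := lt_of_le_of_ne ht₀.2 (by rintro rfl; linarith)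
  set δ := min (t₀ - x) (z - t₀)
  have hδ : 0 < δ := lt_min (by linarith) (by linarith)
  have ha : t₀ - δ ∈ Icc x z := ⟨by linarith [min_le_left (t₀ - x) (z - t₀)], by linarith⟩
  have hb : t₀ + δ ∈ Icc x z := ⟨by linarith, by linarith [min_le_right (t₀ - x) (z - t₀)]⟩
  have hga : g t < g (t₀ - δ) := lt_of_le_of_ne (hmin ha) fun h =>
    absurd (hleast ⟨ha, h.symm⟩) (by linarith)
  have := hmid _ ha _ hb
  rw [show (t₀ - δ + (t₀ + δ)) / 2 = t₀ by ring, ht₀min] at this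
  linarith [show g t ≤ g (t₀ + δ) from hmin hb]

lemma concaveOn_of_midpoint_concave {s : Set ℝ} {g : ℝ → ℝ} (hs : Convex ℝ s)
    (hg : ContinuousOn g s) (hmid : ∀ a ∈ s, ∀ b ∈ s, g a + g b ≤ 2 * g ((a + b) / 2)) :
    ConcaveOn ℝ s g := by
  refine concaveOn_of_slope_anti_adjacent hs fun {x y z} hx hz hxy hyz => ?_
  have hsub : Icc x z ⊆ s := hs.ordConnected.out hx hz
  set k := (g z - g x) / (z - x)
  have hxz : 0 < z - x := by linarith
  have hk : k * (z - x) = g z - g x := div_mul_cancel₀ _ hxz.ne'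
  have hchord := nonneg_of_midpoint_concave (g := fun u => g u - (g x + k * (u - x)))
    ((hg.mono hsub).sub (by fun_prop))
    (fun a ha b hb => by linarith [hmid a (hsub ha) b (hsub hb)])
    (by simp) (by simp [hk]) y ⟨hxy.le, hyz.le⟩
  rw [div_le_div_iff₀ (by linarith) (by linarith)]
  nlinarith [mul_nonneg (sub_nonneg.2 hchord) hxz.le]

section DensMeasure

variable {f : ℝ → ℝ}

lemma densMeasure_singleton (x : ℝ) : densMeasure f {x} = 0 :=
  withDensity_absolutelyContinuous volume _ (Real.volume_singleton)

lemma densMeasure_eq_zero_of_nonpos {s : Set ℝ} (hf : Continuous f) (h : ∀ t ∈ s, f t ≤ 0) :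
    densMeasure f s = 0 := by
  refine (withDensity_apply_eq_zero' hf.measurable.ennreal_ofReal.aemeasurable).2 ?_
  convert measure_empty (μ := volume)
  ext t
  simpa using fun hft ht => (h t ht).not_gt hft

lemma densMeasure_Ioc_pos {x y : ℝ} (hf : Continuous f) (hxy : x < y)
    (h : ∀ t ∈ Ioo x y, 0 < f t) : 0 < densMeasure f (Ioc x y) := by
  refine pos_iff_ne_zero.2 fun h0 => ?_
  rw [densMeasure, withDensity_apply_eq_zero' hf.measurable.ennreal_ofReal.aemeasurable] at h0
  have : Ioo x y ⊆ {t | ENNReal.ofReal (f t) ≠ 0} ∩ Ioc x y := fun t ht =>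
    ⟨by simpa using h t ht, Ioo_subset_Ioc_self ht⟩
  have := measure_mono_null this h0
  simp at this
  linarith

lemma densMeasure_Iic_neg (hf : ∀ x, f (-x) = f x) (x : ℝ) :
    densMeasure f (Iic (-x)) = densMeasure f (Ici x) := by
  have := (Measure.measurePreserving_neg (volume : Measure ℝ)).setLIntegral_comp_preimage_emb
    (Homeomorph.neg ℝ).measurableEmbedding (fun t => ENNReal.ofReal (f t)) (Iic (-x))
  simp only [hf] at this
  rw [densMeasure, withDensity_apply _ measurableSet_Iic, withDensity_apply _ measurableSet_Ici,
    ← this]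
  simp

variable [IsProbabilityMeasure (densMeasure f)]

lemma measure_Ioc_eq_ofReal_cdf_sub (μ : Measure ℝ) [IsProbabilityMeasure μ] (a b : ℝ) :
    μ (Ioc a b) = ENNReal.ofReal (cdf μ b - cdf μ a) := by
  rw [← (cdf μ).measure_Ioc, measure_cdf]

lemma cdf_lt_cdf_of_pos {x y : ℝ} (hf : Continuous f) (hxy : x < y)
    (h : ∀ t ∈ Ioo x y, 0 < f t) : cdf (densMeasure f) x < cdf (densMeasure f) y := by
  have := densMeasure_Ioc_pos hf hxy h
  rw [measure_Ioc_eq_ofReal_cdf_sub, ENNReal.ofReal_pos, sub_pos] at this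
  exact this

lemma cdf_eq_zero_of_nonpos {x : ℝ} (hf : Continuous f) (h : ∀ t ≤ x, f t ≤ 0) :
    cdf (densMeasure f) x = 0 := by
  rw [cdf_eq_real, measureReal_def, densMeasure_eq_zero_of_nonpos (s := Iic x) hf h,
    ENNReal.toReal_zero]

lemma cdf_eq_one_of_nonpos {x : ℝ} (hf : Continuous f) (h : ∀ t > x, f t ≤ 0) :
    cdf (densMeasure f) x = 1 := by
  have : densMeasure f (Iic x)ᶜ = 0 := by
    rw [compl_Iic]; exact densMeasure_eq_zero_of_nonpos hf h
  rw [cdf_eq_real, measureReal_def, prob_compl_eq_zero_iff measurableSet_Iic |>.1 this,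
    ENNReal.toReal_one]

lemma hasDerivAt_cdf_densMeasure (hf : Continuous f) (x : ℝ) :
    HasDerivAt (cdf (densMeasure f)) (max (f x) 0) x := by
  have hg : Continuous fun t => max (f t) 0 := hf.max continuous_const
  have hint : Integrable (fun t => max (f t) 0) := by
    simpa [ENNReal.toReal_ofReal'] using integrable_toReal_of_lintegral_ne_top
      hf.measurable.ennreal_ofReal.aemeasurable
      (by simpa [densMeasure] using (measure_ne_top (densMeasure f) univ))
  have hcdf : ∀ y, cdf (densMeasure f) y = ∫ t in Iic y, max (f t) 0 := fun y => by
    rw [cdf_eq_real, ← mul_one ((densMeasure f).real _), ← smul_eq_mul, ← setIntegral_const,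
      densMeasure, setIntegral_withDensity_eq_setIntegral_toReal_smul
        hf.measurable.ennreal_ofReal (ae_of_all _ fun _ => ENNReal.ofReal_lt_top) _
        measurableSet_Iic]
    simp [ENNReal.toReal_ofReal']
  have hsplit : cdf (densMeasure f) =
      fun y => cdf (densMeasure f) 0 + ∫ t in (0:ℝ)..y, max (f t) 0 := by
    ext y
    rw [hcdf, hcdf, ← intervalIntegral.integral_Iic_sub_Iic hint.integrableOn hint.integrableOn]
    ring
  rw [hsplit]
  exact (intervalIntegral.integral_hasDerivAt_right hint.intervalIntegrable
    hg.stronglyMeasurable.stronglyMeasurableAtFilter hg.continuousAt).const_add _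

lemma cdf_neg (hf : ∀ x, f (-x) = f x) (x : ℝ) :
    cdf (densMeasure f) (-x) = 1 - cdf (densMeasure f) x := by
  rw [cdf_eq_real, cdf_eq_real, measureReal_def, densMeasure_Iic_neg hf, ← compl_Iio,
    prob_compl_eq_one_sub measurableSet_Iio,
    measure_congr (Iio_ae_eq_Iic' (densMeasure_singleton x)),
    ENNReal.toReal_sub_of_le prob_le_one ENNReal.one_ne_top, measureReal_def, ENNReal.toReal_one]

end DensMeasure

section Quantile

variable {f Finv : ℝ → ℝ}

lemma Set.RightInvOn.strictMonoOn_of_monotone {α β : Type*} [LinearOrder α] [LinearOrder β]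
    {F : α → β} {G : β → α} {s : Set β} (h : RightInvOn G F s) (hF : Monotone F) :
    StrictMonoOn G s := fun r hr r' hr' hrr' => by
  by_contra! hle
  have := hF hle
  rw [h hr, h hr'] at this
  exact this.not_gt hrr'

variable [IsProbabilityMeasure (densMeasure f)]

lemma strictMonoOn_cdf_densMeasure (hf : Continuous f) (hS : OrdConnected {x | 0 < f x}) :
    StrictMonoOn (cdf (densMeasure f)) {x | 0 < f x} := fun _ hx _ hy hxy =>
  cdf_lt_cdf_of_pos hf hxy fun _ ht => hS.out hx hy (Ioo_subset_Icc_self ht)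

lemma cdf_densMeasure_mem_Ioo (hf : Continuous f) {x : ℝ} (hx : 0 < f x) :
    cdf (densMeasure f) x ∈ Ioo 0 1 := by
  have hnhds : {x | 0 < f x} ∈ 𝓝 x := (isOpen_lt continuous_const hf).mem_nhds hx
  obtain ⟨l, hl, hlS⟩ := exists_Ioc_subset_of_mem_nhds hnhds ⟨x - 1, by linarith⟩
  obtain ⟨u, hu, huS⟩ := exists_Ico_subset_of_mem_nhds hnhds ⟨x + 1, by linarith⟩
  exact ⟨(cdf_nonneg _ l).trans_lt
      (cdf_lt_cdf_of_pos hf hl fun t ht => hlS (Ioo_subset_Ioc_self ht)),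
    (cdf_lt_cdf_of_pos hf hu fun t ht => huS (Ioo_subset_Ico_self ht)).trans_le (cdf_le_one _ u)⟩

lemma pos_of_rightInvOn_cdf (hf : Continuous f) (hS : OrdConnected {x | 0 < f x})
    (hinv : RightInvOn Finv (cdf (densMeasure f)) (Ioo 0 1)) {r : ℝ} (hr : r ∈ Ioo 0 1) :
    0 < f (Finv r) := by
  by_contra! hx
  have hcdf := hinv hr
  by_cases hright : ∃ t > Finv r, 0 < f t
  · obtain ⟨t, hxt, ht⟩ := hright
    have hleft : ∀ s ≤ Finv r, f s ≤ 0 := fun s hs => by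
      by_contra! h
      exact (hS.out h ht ⟨hs, hxt.le⟩).not_ge hx
    rw [cdf_eq_zero_of_nonpos hf hleft] at hcdf
    exact hr.1.ne hcdf
  · push Not at hright
    rw [cdf_eq_one_of_nonpos hf hright] at hcdf
    exact hr.2.ne' hcdf

lemma leftInvOn_cdf (hf : Continuous f) (hS : OrdConnected {x | 0 < f x})
    (hinv : RightInvOn Finv (cdf (densMeasure f)) (Ioo 0 1)) :
    LeftInvOn Finv (cdf (densMeasure f)) {x | 0 < f x} := fun _ hx =>
  (strictMonoOn_cdf_densMeasure hf hS).injOn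
    (pos_of_rightInvOn_cdf hf hS hinv (cdf_densMeasure_mem_Ioo hf hx)) hx
    (hinv (cdf_densMeasure_mem_Ioo hf hx))

lemma continuousOn_of_rightInvOn_cdf (hf : Continuous f) (hS : OrdConnected {x | 0 < f x})
    (hinv : RightInvOn Finv (cdf (densMeasure f)) (Ioo 0 1)) : ContinuousOn Finv (Ioo 0 1) := by
  have himage : Finv '' Ioo 0 1 = {x | 0 < f x} := by
    refine Subset.antisymm ?_ fun x hx =>
      ⟨_, cdf_densMeasure_mem_Ioo hf hx, leftInvOn_cdf hf hS hinv hx⟩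
    rintro _ ⟨r, hr, rfl⟩
    exact pos_of_rightInvOn_cdf hf hS hinv hr
  refine fun r hr => (continuousAt_of_monotoneOn_of_image_mem_nhds
    (hinv.strictMonoOn_of_monotone (monotone_cdf _)).monotoneOn
    (isOpen_Ioo.mem_nhds hr) ?_).continuousWithinAt
  rw [himage]
  exact (isOpen_lt continuous_const hf).mem_nhds (pos_of_rightInvOn_cdf hf hS hinv hr)

lemma densMeasure_Ioo_of_rightInvOn_cdf (hinv : RightInvOn Finv (cdf (densMeasure f)) (Ioo 0 1))
    {r s : ℝ} (hr : r ∈ Ioo 0 1) (hs : s ∈ Ioo 0 1) :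
    densMeasure f (Ioo (Finv r) (Finv s)) = ENNReal.ofReal (s - r) := by
  rw [measure_congr (Ioo_ae_eq_Ioc' (densMeasure_singleton _)), measure_Ioc_eq_ofReal_cdf_sub,
    hinv hr, hinv hs]

lemma map_one_sub_of_rightInvOn_cdf (hf : Continuous f) (hS : OrdConnected {x | 0 < f x})
    (heven : ∀ x, f (-x) = f x) (hinv : RightInvOn Finv (cdf (densMeasure f)) (Ioo 0 1))
    {r : ℝ} (hr : r ∈ Ioo 0 1) : Finv (1 - r) = -Finv r := by
  have hr' : 1 - r ∈ Ioo (0 : ℝ) 1 := ⟨by linarith [hr.2], by linarith [hr.1]⟩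
  refine (strictMonoOn_cdf_densMeasure hf hS).injOn (pos_of_rightInvOn_cdf hf hS hinv hr')
    (by simpa [heven] using pos_of_rightInvOn_cdf hf hS hinv hr) ?_
  rw [cdf_neg heven, hinv hr, hinv hr']

end Quantile
def HasLeftShiftingProperty (f : ℝ → ℝ) : Prop :=
  ∀ a b a' b' : ℝ, a < b → a + b ≤ 0 → a' < b' → b' ≤ b →
    densMeasure f (Ioo a b) = densMeasure f (Ioo a' b') → f a' + f b' ≤ f a + f b

section Isoperimetric

variable {f Finv : ℝ → ℝ} [IsProbabilityMeasure (densMeasure f)]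

lemma add_le_add_of_shift_left (hf : Continuous f) (hS : OrdConnected {x | 0 < f x})
    (heven : ∀ x, f (-x) = f x) (hinv : RightInvOn Finv (cdf (densMeasure f)) (Ioo 0 1))
    (hshift : HasLeftShiftingProperty f)
    {t t' p : ℝ} (ht : 0 < t) (htt' : t ≤ t') (hp : 0 < p) (h : 2 * t' + p ≤ 1) :
    f (Finv t) + f (Finv (t + p)) ≤ f (Finv t') + f (Finv (t' + p)) := by
  have mem : ∀ u : ℝ, 0 < u → u < 1 → u ∈ Ioo (0 : ℝ) 1 := fun u h0 h1 => ⟨h0, h1⟩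
  have hmono := hinv.strictMonoOn_of_monotone (monotone_cdf _)
  have ht' := mem t' (by linarith) (by linarith)
  have htp := mem (t + p) (by linarith) (by linarith)
  have ht'p := mem (t' + p) (by linarith) (by linarith)
  have ht₁ := mem t ht (by linarith)
  have hsym : Finv (t' + p) ≤ -Finv t' := by
    rw [← map_one_sub_of_rightInvOn_cdf hf hS heven hinv ht']
    exact hmono.monotoneOn ht'p (mem _ (by linarith) (by linarith)) (by linarith)
  refine hshift _ _ _ _ (hmono ht' ht'p (by linarith)) (by linarith) (hmono ht₁ htp (by linarith))
    (hmono.monotoneOn htp ht'p (by linarith)) ?_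
  rw [densMeasure_Ioo_of_rightInvOn_cdf hinv ht' ht'p,
    densMeasure_Ioo_of_rightInvOn_cdf hinv ht₁ htp]
  ring_nf

lemma midpoint_concave_of_shift_left (hf : Continuous f) (hS : OrdConnected {x | 0 < f x})
    (heven : ∀ x, f (-x) = f x) (hinv : RightInvOn Finv (cdf (densMeasure f)) (Ioo 0 1))
    (hshift : HasLeftShiftingProperty f)
    {a d : ℝ} (ha : a ∈ Ioo 0 1) (hd : d ∈ Ioo 0 1) :
    f (Finv a) + f (Finv d) ≤ 2 * f (Finv ((a + d) / 2)) := by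
  have hsymm : ∀ r ∈ Ioo (0 : ℝ) 1, f (Finv (1 - r)) = f (Finv r) := fun r hr => by
    rw [map_one_sub_of_rightInvOn_cdf hf hS heven hinv hr, heven]
  -- shift `(a, 1 - d)` to `((a + d) / 2, 1 - (a + d) / 2)`, then reflect the right points
  have hlt : ∀ a d, a ∈ Ioo (0 : ℝ) 1 → d ∈ Ioo (0 : ℝ) 1 → a + d < 1 →
      f (Finv a) + f (Finv d) ≤ 2 * f (Finv ((a + d) / 2)) := by
    intro a d ha hd h
    wlog had : a ≤ d generalizing a d
    · rw [add_comm a d, add_comm (f (Finv a))]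
      exact this d a hd ha (by linarith) (by linarith)
    have := add_le_add_of_shift_left hf hS heven hinv hshift (t := a) (t' := (a + d) / 2)
      (p := 1 - a - d) ha.1 (by linarith) (by linarith) (by linarith)
    rw [show a + (1 - a - d) = 1 - d by ring,
      show (a + d) / 2 + (1 - a - d) = 1 - (a + d) / 2 by ring,
      hsymm d hd, hsymm _ ⟨by linarith [ha.1, hd.1], by linarith⟩] at this
    linarith
  rcases lt_trichotomy (a + d) 1 with h | h | h
  · exact hlt a d ha hd h
  · have hgc : ContinuousOn (fun r => f (Finv r)) (Ioo 0 1) :=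
      hf.comp_continuousOn (continuousOn_of_rightInvOn_cdf hf hS hinv)
    have hm : (a + d) / 2 ∈ Ioo (0 : ℝ) 1 := ⟨by linarith [ha.1, hd.1], by linarith⟩
    have hlim : Tendsto (fun d' => f (Finv a) + f (Finv d') - 2 * f (Finv ((a + d') / 2)))
        (𝓝[<] d) (𝓝 (f (Finv a) + f (Finv d) - 2 * f (Finv ((a + d) / 2)))) := by
      have h1 := hgc.continuousAt (isOpen_Ioo.mem_nhds hd)
      have h2 : ContinuousAt (fun d' => f (Finv ((a + d') / 2))) d :=
        (hgc.continuousAt (isOpen_Ioo.mem_nhds hm)).comp (f := fun d' => (a + d') / 2) (by fun_prop)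
      exact ((continuousAt_const.add h1).sub (h2.const_mul 2)).tendsto.mono_left nhdsWithin_le_nhds
    have hev : ∀ᶠ d' in 𝓝[<] d, f (Finv a) + f (Finv d') - 2 * f (Finv ((a + d') / 2)) ≤ 0 := by
      filter_upwards [Ioo_mem_nhdsLT hd.1] with d' hd'
      exact sub_nonpos.2 (hlt a d' ha ⟨hd'.1, hd'.2.trans hd.2⟩ (by linarith [hd'.2]))
    linarith [le_of_tendsto hlim hev]
  · have := hlt (1 - a) (1 - d) ⟨by linarith [ha.2], by linarith [ha.1]⟩
      ⟨by linarith [hd.2], by linarith [hd.1]⟩ (by linarith)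
    rwa [show (1 - a + (1 - d)) / 2 = 1 - (a + d) / 2 by ring, hsymm a ha, hsymm d hd,
      hsymm _ ⟨by linarith [ha.1, hd.1], by linarith [ha.2, hd.2]⟩] at this

lemma concaveOn_comp_of_shift_left (hf : Continuous f) (hS : OrdConnected {x | 0 < f x})
    (heven : ∀ x, f (-x) = f x) (hinv : RightInvOn Finv (cdf (densMeasure f)) (Ioo 0 1))
    (hshift : HasLeftShiftingProperty f) :
    ConcaveOn ℝ (Ioo 0 1) (fun r => f (Finv r)) :=
  concaveOn_of_midpoint_concave (convex_Ioo 0 1)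
    (hf.comp_continuousOn (continuousOn_of_rightInvOn_cdf hf hS hinv))
    fun _ ha _ hd => midpoint_concave_of_shift_left hf hS heven hinv hshift ha hd

lemma hasDerivWithinAt_log_Ici (hf : Continuous f) (hS : OrdConnected {x | 0 < f x})
    (hinv : RightInvOn Finv (cdf (densMeasure f)) (Ioo 0 1))
    (hconc : ConcaveOn ℝ (Ioo 0 1) (fun r => f (Finv r))) {x : ℝ} (hx : 0 < f x) :
    HasDerivWithinAt (fun x => Real.log (f x))
      (derivWithin (fun r => f (Finv r)) (Ioi (cdf (densMeasure f) x)) (cdf (densMeasure f) x))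
      (Ici x) x := by
  have hq := cdf_densMeasure_mem_Ioo hf hx
  have hJ : HasDerivWithinAt (fun r => f (Finv r))
      (derivWithin (fun r => f (Finv r)) (Ioi (cdf (densMeasure f) x)) (cdf (densMeasure f) x))
      (Ici (cdf (densMeasure f) x)) (cdf (densMeasure f) x) := by
    have := (hconc.neg.differentiableWithinAt_Ioi_of_mem_interior (by rwa [interior_Ioo])).neg
    rw [neg_neg] at this
    exact hasDerivWithinAt_Ioi_iff_Ici.1 this.hasDerivWithinAt
  have hcomp := hJ.comp x (hasDerivAt_cdf_densMeasure hf x).hasDerivWithinAt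
    fun y hy => monotone_cdf _ hy
  rw [max_eq_left hx.le] at hcomp
  have heq : (fun r => f (Finv r)) ∘ cdf (densMeasure f) =ᶠ[𝓝[Ici x] x] f := by
    filter_upwards [nhdsWithin_le_nhds ((isOpen_lt continuous_const hf).mem_nhds hx)] with y hy
    simp [leftInvOn_cdf hf hS hinv hy]
  have := (hcomp.congr_of_eventuallyEq heq.symm
    (heq.self_of_nhdsWithin self_mem_Ici).symm).log hx.ne'
  rwa [mul_div_cancel_right₀ _ hx.ne'] at this

lemma concaveOn_log_of_concaveOn_comp (hf : Continuous f) (hS : OrdConnected {x | 0 < f x})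
    (hinv : RightInvOn Finv (cdf (densMeasure f)) (Ioo 0 1))
    (hconc : ConcaveOn ℝ (Ioo 0 1) (fun r => f (Finv r))) :
    ConcaveOn ℝ {x | 0 < f x} (fun x => Real.log (f x)) := by
  have hanti : AntitoneOn (fun q => derivWithin (fun r => f (Finv r)) (Ioi q) q) (Ioo 0 1) := by
    intro q hq q' hq' hqq'
    have := hconc.neg.monotoneOn_rightDeriv (by rwa [interior_Ioo]) (by rwa [interior_Ioo]) hqq'
    simp only [derivWithin.neg] at this
    linarith
  refine AntitoneOn.concaveOn_of_hasDerivWithinAt_Ici ?_ hS.convex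
    (hf.continuousOn.log fun _ hx => hx.ne')
    fun x hx => hasDerivWithinAt_log_Ici hf hS hinv hconc hx
  exact fun x hx y hy hxy => hanti (cdf_densMeasure_mem_Ioo hf hx) (cdf_densMeasure_mem_Ioo hf hy)
    (monotone_cdf _ hxy)

end Isoperimetric

lemma ordConnected_setOf_ofReal_abs_lt (b : ℝ≥0∞) : OrdConnected {x : ℝ | ENNReal.ofReal |x| < b} :=
  ⟨fun x hx y hy t ht => lt_of_le_of_lt (ENNReal.ofReal_le_ofReal (abs_le_max_abs_abs ht.1 ht.2))
    (by simpa using ⟨hx, hy⟩)⟩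

theorem converse_shifting_lemma_general
    (f : ℝ → ℝ) (b₀ : ℝ≥0∞)
    (hf_cont : Continuous f)
    (hf_pos : ∀ x : ℝ, 0 < f x ↔ ENNReal.ofReal |x| < b₀)
    (hf_even : ∀ x : ℝ, f (-x) = f x)
    (hprob : IsProbabilityMeasure (densMeasure f))
    (Finv : ℝ → ℝ)
    (hFinv : ∀ r ∈ Ioo (0:ℝ) 1, (densMeasure f (Iic (Finv r))).toReal = r)
    (J : ℝ → ℝ)
    (hJ : ∀ r ∈ Ioo (0:ℝ) 1, J r = f (Finv r))
    (hshift_left : ∀ a b a' b' : ℝ, a < b → a + b ≤ 0 → a' < b' → b' ≤ b →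
      densMeasure f (Ioo a b) = densMeasure f (Ioo a' b') →
      f a' + f b' ≤ f a + f b) :
    ConcaveOn ℝ {x : ℝ | 0 < f x} (fun x => Real.log (f x)) ∧
    ConcaveOn ℝ (Ioo (0:ℝ) 1) J := by
  have hS : OrdConnected {x | 0 < f x} := by
    rw [show {x | 0 < f x} = {x : ℝ | ENNReal.ofReal |x| < b₀} from Set.ext hf_pos]
    exact ordConnected_setOf_ofReal_abs_lt b₀
  have hinv : RightInvOn Finv (cdf (densMeasure f)) (Ioo 0 1) := fun r hr =>
    (cdf_eq_real _ _).trans (hFinv r hr)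
  have hconc := concaveOn_comp_of_shift_left hf_cont hS hf_even hinv hshift_left
  exact ⟨concaveOn_log_of_concaveOn_comp hf_cont hS hinv hconc,
    hconc.congr fun r hr => (hJ r hr).symm⟩

/-- **Converse of the shifting lemma.** If a continuous, even probability density `f`,
positive exactly on `(-b₀, b₀)`, gives rise to a measure with the shifting property,
then the measure is log-concave; equivalently, its isoperimetric function `J` is
concave on `(0,1)`. -/
theorem converse_shifting_lemma
    (f : ℝ → ℝ) (b₀ : ℝ≥0∞) (hb₀ : 0 < b₀)
    (hf_cont : Continuous f)
    (hf_pos : ∀ x : ℝ, 0 < f x ↔ ENNReal.ofReal |x| < b₀)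
    (hf_even : ∀ x : ℝ, f (-x) = f x)
    (hprob : IsProbabilityMeasure (densMeasure f))
    (Finv : ℝ → ℝ)
    (hFinv : ∀ r ∈ Ioo (0:ℝ) 1, (densMeasure f (Iic (Finv r))).toReal = r)
    (J : ℝ → ℝ)
    (hJ : ∀ r ∈ Ioo (0:ℝ) 1, J r = f (Finv r))
    (hshift_right : ∀ a b a' b' : ℝ, a < b → 0 ≤ a + b → a ≤ a' → a' < b' →
      densMeasure f (Ioo a b) = densMeasure f (Ioo a' b') →
      f a' + f b' ≤ f a + f b)
    (hshift_left : ∀ a b a' b' : ℝ, a < b → a + b ≤ 0 → a' < b' → b' ≤ b →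
      densMeasure f (Ioo a b) = densMeasure f (Ioo a' b') →
      f a' + f b' ≤ f a + f b) :
    ConcaveOn ℝ {x : ℝ | 0 < f x} (fun x => Real.log (f x)) ∧
    ConcaveOn ℝ (Ioo (0:ℝ) 1) J :=
  converse_shifting_lemma_general f b₀ hf_cont hf_pos hf_even hprob Finv hFinv J hJ hshift_left
end

section
/- Let r, λ be reals with 0 < r ≤ 1/2 and 0 < λ ≤ min(2r, 1 − r). Then the connected set Ω_c = (F⁻¹(λ/2), F⁻¹(r + λ/2)) satisfies μ(Ω_c) = r and λ(Ω_c) = λ. -/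
open MeasureTheory Set Filter Topology
open scoped ENNReal

/-- The essential boundary of a set `Ω ⊆ ℝ`: points whose Lebesgue density in `Ω`
is neither `0` nor `1`. -/
def essBoundary (Ω : Set ℝ) : Set ℝ :=
  {x : ℝ |
    ¬ Tendsto (fun ρ : ℝ => (MeasureTheory.volume (Ω ∩ Ioo (x - ρ) (x + ρ))).toReal / (2 * ρ))
        (nhdsWithin 0 (Ioi 0)) (nhds 0) ∧
    ¬ Tendsto (fun ρ : ℝ => (MeasureTheory.volume (Ω ∩ Ioo (x - ρ) (x + ρ))).toReal / (2 * ρ))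
        (nhdsWithin 0 (Ioi 0)) (nhds 1)}

/-- The `μ`-perimeter of `Ω`: the integral of the density `f` over the essential boundary
of `Ω` with respect to the 0-dimensional Hausdorff (counting) measure. -/
noncomputable def perim (f : ℝ → ℝ) (Ω : Set ℝ) : ℝ≥0∞ :=
  ∫⁻ x in essBoundary Ω, ENNReal.ofReal (f x) ∂Measure.count

/-- The setup of the paper: an even, log-concave probability density `f` on `ℝ`,
positive exactly on the symmetric interval `(-b₀, b₀)` (with `b₀ ∈ (0, ∞]`),
together with the inverse `Finv` of the cumulative distribution function on `(0,1)`
and the isoperimetric function `J` given by `J r = f (Finv r)` on `(0,1)`,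
`J 0 = J 1 = 0`. -/
structure LogConcaveSetup where
  f : ℝ → ℝ
  b₀ : ℝ≥0∞
  hb₀ : 0 < b₀
  hf_meas : Measurable f
  hf_pos : ∀ x : ℝ, 0 < f x ↔ ENNReal.ofReal |x| < b₀
  hf_even : ∀ x : ℝ, f (-x) = f x
  hf_logConcave : ConcaveOn ℝ {x : ℝ | 0 < f x} (fun x => Real.log (f x))
  hprob : IsProbabilityMeasure (densMeasure f)
  Finv : ℝ → ℝ
  hFinv : ∀ r ∈ Ioo (0:ℝ) 1, (densMeasure f (Iic (Finv r))).toReal = r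
  J : ℝ → ℝ
  hJ : ∀ r ∈ Ioo (0:ℝ) 1, J r = f (Finv r)
  hJ0 : J 0 = 0
  hJ1 : J 1 = 0

/-- The asymmetry `λ(Ω)`: the minimum of the `μ`-measures of the symmetric differences
of `Ω` with the two half-lines of the same `μ`-measure as `Ω`. -/
noncomputable def asym (S : LogConcaveSetup) (Ω : Set ℝ) : ℝ :=
  min ((densMeasure S.f (symmDiff Ω (Iio (S.Finv ((densMeasure S.f Ω).toReal))))).toReal)
      ((densMeasure S.f (symmDiff Ω (Ioi (S.Finv (1 - (densMeasure S.f Ω).toReal))))).toReal)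

/-!
`μ` has no atoms, so the `μ`-measure of any Boolean combination of intervals is read off from the
CDF `F` at the endpoints, and `F (F⁻¹ s) = s`. For `Ω = (a, b)` and a half-line `H`,
`μ (Ω ∆ H) = μ Ω + μ H - 2 μ (Ω ∩ H)` with `Ω ∩ H` again an interval. With `F a = λ/2`,
`F b = r + λ/2` this gives `λ` for the left half-line and `min (2r) (2 - 2r - λ) ≥ λ` for the
right one.
-/

open ProbabilityTheory
open scoped symmDiff

instance (f : ℝ → ℝ) : NullSingletonClass (densMeasure f) := by
  unfold densMeasure
  infer_instance

lemma measureReal_symmDiff_eq_add_sub_inter {α : Type*} [MeasurableSpace α] {μ : Measure α}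
    [IsFiniteMeasure μ] {s t : Set α} (hs : MeasurableSet s) (ht : MeasurableSet t) :
    μ.real (s ∆ t) = μ.real s + μ.real t - 2 * μ.real (s ∩ t) := by
  have hs' := measureReal_inter_add_sdiff (μ := μ) (s := s) ht
  have ht' := measureReal_inter_add_sdiff (μ := μ) (s := t) hs
  rw [inter_comm] at ht'
  rw [measureReal_symmDiff_eq hs ht]
  linarith

section cdf

variable (μ : Measure ℝ) [IsProbabilityMeasure μ]

lemma measureReal_Ioi_eq_one_sub_cdf (x : ℝ) : μ.real (Ioi x) = 1 - cdf μ x := by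
  rw [← compl_Iic, probReal_compl_eq_one_sub measurableSet_Iic, cdf_eq_real]

variable [NullSingletonClass μ]

lemma measureReal_Iio_eq_cdf (x : ℝ) : μ.real (Iio x) = cdf μ x := by
  rw [cdf_eq_real, measureReal_congr Iio_ae_eq_Iic]

lemma measureReal_Ioo_eq_cdf (a b : ℝ) : μ.real (Ioo a b) = max (cdf μ b - cdf μ a) 0 := by
  rcases le_total a b with hab | hba
  · rw [measureReal_congr Ioo_ae_eq_Ioc, ← Iic_sdiff_Iic,
      measureReal_sdiff (Iic_subset_Iic.2 hab) measurableSet_Iic, cdf_eq_real, cdf_eq_real,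
      max_eq_left (sub_nonneg.2 (measureReal_mono (Iic_subset_Iic.2 hab)))]
  · rw [Ioo_eq_empty_of_le hba, measureReal_empty,
      max_eq_right (sub_nonpos.2 (monotone_cdf μ hba))]

lemma measureReal_Ioo_symmDiff_Iio (a b c : ℝ) :
    μ.real (Ioo a b ∆ Iio c) =
      max (cdf μ b - cdf μ a) 0 + cdf μ c - 2 * max (min (cdf μ b) (cdf μ c) - cdf μ a) 0 := by
  rw [measureReal_symmDiff_eq_add_sub_inter measurableSet_Ioo measurableSet_Iio, Ioo_inter_Iio,
    measureReal_Ioo_eq_cdf, measureReal_Ioo_eq_cdf, measureReal_Iio_eq_cdf,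
    (monotone_cdf μ).map_min]

lemma measureReal_Ioo_symmDiff_Ioi (a b d : ℝ) :
    μ.real (Ioo a b ∆ Ioi d) =
      max (cdf μ b - cdf μ a) 0 + (1 - cdf μ d)
        - 2 * max (cdf μ b - max (cdf μ a) (cdf μ d)) 0 := by
  have hinter : Ioo a b ∩ Ioi d = Ioo (max a d) b := by
    ext x
    simp only [mem_inter_iff, mem_Ioo, mem_Ioi, max_lt_iff]
    tauto
  rw [measureReal_symmDiff_eq_add_sub_inter measurableSet_Ioo measurableSet_Ioi, hinter,
    measureReal_Ioo_eq_cdf, measureReal_Ioo_eq_cdf, measureReal_Ioi_eq_one_sub_cdf,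
    (monotone_cdf μ).map_max]

end cdf

theorem omega_c_measure_asym_general (S : LogConcaveSetup) (r lam : ℝ)
    (hr0 : 0 < r)
    (hl0 : 0 < lam) (hl : lam ≤ min (2 * r) (1 - r)) :
    (densMeasure S.f (Ioo (S.Finv (lam / 2)) (S.Finv (r + lam / 2)))).toReal = r ∧
    asym S (Ioo (S.Finv (lam / 2)) (S.Finv (r + lam / 2))) = lam := by
  obtain ⟨hl2r, hl1r⟩ := le_min_iff.mp hl
  have := S.hprob
  set μ := densMeasure S.f
  have hF : ∀ s ∈ Ioo (0 : ℝ) 1, cdf μ (S.Finv s) = s := fun s hs => by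
    rw [cdf_eq_real, measureReal_def]
    exact S.hFinv s hs
  have ha := hF (lam / 2) ⟨by linarith, by linarith⟩
  have hb := hF (r + lam / 2) ⟨by linarith, by linarith⟩
  have hc := hF r ⟨hr0, by linarith⟩
  have hd := hF (1 - r) ⟨by linarith, by linarith⟩
  have hΩ : μ.real (Ioo (S.Finv (lam / 2)) (S.Finv (r + lam / 2))) = r := by
    rw [measureReal_Ioo_eq_cdf, ha, hb, add_sub_cancel_right, max_eq_left hr0.le]
  refine ⟨hΩ, ?_⟩
  simp only [asym, ← measureReal_def]
  rw [hΩ]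
  have hleft : μ.real (Ioo (S.Finv (lam / 2)) (S.Finv (r + lam / 2)) ∆ Iio (S.Finv r)) = lam := by
    rw [measureReal_Ioo_symmDiff_Iio, ha, hb, hc]
    simp only [max_def, min_def]
    split_ifs <;> linarith
  have hright :
      lam ≤ μ.real (Ioo (S.Finv (lam / 2)) (S.Finv (r + lam / 2)) ∆ Ioi (S.Finv (1 - r))) := by
    rw [measureReal_Ioo_symmDiff_Ioi, ha, hb, hd]
    simp only [max_def]
    split_ifs <;> linarith
  rw [hleft, min_eq_left hright]

/-- The connected competitor `Ω_c = (F⁻¹(λ/2), F⁻¹(r + λ/2))` has `μ`-measure `r`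
and asymmetry `λ`, whenever `0 < r ≤ 1/2` and `0 < λ ≤ min (2r) (1-r)`. -/
theorem omega_c_measure_asym (S : LogConcaveSetup) (r lam : ℝ)
    (hr0 : 0 < r) (hr : r ≤ 1 / 2)
    (hl0 : 0 < lam) (hl : lam ≤ min (2 * r) (1 - r)) :
    (densMeasure S.f (Ioo (S.Finv (lam / 2)) (S.Finv (r + lam / 2)))).toReal = r ∧
    asym S (Ioo (S.Finv (lam / 2)) (S.Finv (r + lam / 2))) = lam :=
  omega_c_measure_asym_general S r lam hr0 hl0 hl
end

section
/- Let r, λ be reals with 0 < r ≤ 1/2 and 0 < λ ≤ r. Then the disconnected set Ω_d = (−∞, F⁻¹(r − λ/2)) ∪ (F⁻¹(1 − λ/2), +∞) satisfies μ(Ω_d) = r and λ(Ω_d) = λ. -/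
open MeasureTheory Set Filter Topology
open scoped ENNReal

/-!
Since `μ` has no atoms and `F⁻¹` is a right inverse of the distribution function on `(0,1)`,
`F⁻¹` is strictly increasing there and every interval is measured by differences of `F`. With
`a = F⁻¹(r - λ/2) < F⁻¹(r) < b = F⁻¹(1 - λ/2)` and `a < F⁻¹(1 - r) < b`, the symmetric differences
of `Ω_d = (-∞, a) ∪ (b, ∞)` with the two half-lines of measure `r` are `[a, F⁻¹(r)) ∪ (b, ∞)`
and `(-∞, a) ∪ (F⁻¹(1 - r), b]`, of measures `λ` and `2r - λ ≥ λ`.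
-/

section SymmDiff

variable {α : Type*} [LinearOrder α] {a b c : α}

theorem symmDiff_Iio_union_Ioi_Iio (hac : a ≤ c) (hcb : c ≤ b) :
    symmDiff (Iio a ∪ Ioi b) (Iio c) = Ico a c ∪ Ioi b := by
  ext x
  simp only [Set.mem_symmDiff, mem_union, mem_Iio, mem_Ioi, mem_Ico]
  grind

theorem symmDiff_Iio_union_Ioi_Ioi (hac : a ≤ c) (hcb : c ≤ b) :
    symmDiff (Iio a ∪ Ioi b) (Ioi c) = Iio a ∪ Ioc c b := by
  ext x
  simp only [Set.mem_symmDiff, mem_union, mem_Iio, mem_Ioi, mem_Ioc]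
  grind

end SymmDiff

section Quantile

variable {μ : Measure ℝ}

theorem measureReal_Ioc_eq_sub [IsFiniteMeasure μ] {x y : ℝ} (hxy : x ≤ y) :
    μ.real (Ioc x y) = μ.real (Iic y) - μ.real (Iic x) := by
  rw [← Iic_union_Ioc_eq_Iic hxy, measureReal_union (Iic_disjoint_Ioc le_rfl) measurableSet_Ioc]
  ring

theorem strictMonoOn_of_measureReal_Iic [IsFiniteMeasure μ] {q : ℝ → ℝ}
    (hq : ∀ p ∈ Ioo (0 : ℝ) 1, μ.real (Iic (q p)) = p) : StrictMonoOn q (Ioo 0 1) := by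
  intro p hp p' hp' hpp'
  by_contra! h
  have := measureReal_mono (μ := μ) (Iic_subset_Iic.2 h)
  rw [hq p hp, hq p' hp'] at this
  linarith

theorem measureReal_Iio_union_Ioc [IsFiniteMeasure μ] [NullSingletonClass μ] {a b d : ℝ}
    (had : a ≤ d) (hdb : d ≤ b) :
    μ.real (Iio a ∪ Ioc d b) = μ.real (Iic a) + (μ.real (Iic b) - μ.real (Iic d)) := by
  have hdisj : Disjoint (Iio a) (Ioc d b) :=
    (Iic_disjoint_Ioc had).mono_left Iio_subset_Iic_self
  rw [measureReal_union hdisj measurableSet_Ioc, measureReal_congr Iio_ae_eq_Iic,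
    measureReal_Ioc_eq_sub hdb]

variable [IsProbabilityMeasure μ]

theorem measureReal_Ioi_eq_one_sub (x : ℝ) : μ.real (Ioi x) = 1 - μ.real (Iic x) := by
  rw [← compl_Iic, probReal_compl_eq_one_sub measurableSet_Iic]

variable [NullSingletonClass μ] {a b : ℝ}

theorem measureReal_Iio_union_Ioi (hab : a ≤ b) :
    μ.real (Iio a ∪ Ioi b) = μ.real (Iic a) + (1 - μ.real (Iic b)) := by
  rw [measureReal_union ((Iic_disjoint_Ioi hab).mono_left Iio_subset_Iic_self) measurableSet_Ioi,
    measureReal_congr Iio_ae_eq_Iic, measureReal_Ioi_eq_one_sub]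

theorem measureReal_Ico_union_Ioi {c : ℝ} (hac : a ≤ c) (hcb : c ≤ b) :
    μ.real (Ico a c ∪ Ioi b) = μ.real (Iic c) - μ.real (Iic a) + (1 - μ.real (Iic b)) := by
  have hdisj : Disjoint (Ico a c) (Ioi b) :=
    (Iic_disjoint_Ioi hcb).mono_left (Ico_subset_Iio_self.trans Iio_subset_Iic_self)
  rw [measureReal_union hdisj measurableSet_Ioi, measureReal_congr Ico_ae_eq_Ioc,
    measureReal_Ioc_eq_sub hac, measureReal_Ioi_eq_one_sub]

end Quantile

instance inst_s5 (f : ℝ → ℝ) : NullSingletonClass (densMeasure f) := by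
  unfold densMeasure
  infer_instance

/-- The disconnected competitor `Ω_d = (-∞, F⁻¹(r - λ/2)) ∪ (F⁻¹(1 - λ/2), +∞)` has
`μ`-measure `r` and asymmetry `λ`, whenever `0 < r ≤ 1/2` and `0 < λ ≤ r`. -/
theorem omega_d_measure_asym (S : LogConcaveSetup) (r lam : ℝ)
    (hr0 : 0 < r) (hr : r ≤ 1 / 2)
    (hl0 : 0 < lam) (hl : lam ≤ r) :
    (densMeasure S.f (Iio (S.Finv (r - lam / 2)) ∪ Ioi (S.Finv (1 - lam / 2)))).toReal = r ∧
    asym S (Iio (S.Finv (r - lam / 2)) ∪ Ioi (S.Finv (1 - lam / 2))) = lam := by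
  have := S.hprob
  set μ := densMeasure S.f
  have hq : ∀ p ∈ Ioo (0 : ℝ) 1, μ.real (Iic (S.Finv p)) = p := S.hFinv
  have hmono := strictMonoOn_of_measureReal_Iic hq
  have ha : r - lam / 2 ∈ Ioo (0 : ℝ) 1 := ⟨by linarith, by linarith⟩
  have hb : 1 - lam / 2 ∈ Ioo (0 : ℝ) 1 := ⟨by linarith, by linarith⟩
  have hc : r ∈ Ioo (0 : ℝ) 1 := ⟨hr0, by linarith⟩
  have hd : 1 - r ∈ Ioo (0 : ℝ) 1 := ⟨by linarith, by linarith⟩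
  have hac := hmono ha hc (by linarith)
  have hcb := hmono hc hb (by linarith)
  have had := hmono ha hd (by linarith)
  have hdb := hmono hd hb (by linarith)
  have hΩ : μ.real (Iio (S.Finv (r - lam / 2)) ∪ Ioi (S.Finv (1 - lam / 2))) = r := by
    rw [measureReal_Iio_union_Ioi (hac.trans hcb).le, hq _ ha, hq _ hb]
    ring
  refine ⟨hΩ, ?_⟩
  simp only [asym, ← measureReal_def]
  rw [hΩ, symmDiff_Iio_union_Ioi_Iio hac.le hcb.le, symmDiff_Iio_union_Ioi_Ioi had.le hdb.le,
    measureReal_Ico_union_Ioi hac.le hcb.le, measureReal_Iio_union_Ioc had.le hdb.le,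
    hq _ ha, hq _ hb, hq _ hc, hq _ hd, min_eq_left (by linarith)]
  ring
end

section
/- For every fixed x with 0 < x ≤ 1/2, the function y ↦ K_μ(x, y) is nondecreasing on (0, min(2x, 1−x)]. -/
open MeasureTheory Set Filter Topology
open scoped ENNReal

/-- The isoperimetric deficit function `K_μ`. -/
noncomputable def Kfun (J : ℝ → ℝ) (x y : ℝ) : ℝ :=
  if y ≤ x then J (x - y / 2) - J x + J (y / 2) else J (x + y / 2) - J x + J (y / 2)

/-- The convenient lower bound `L_μ` on the isoperimetric deficit function. -/
noncomputable def Lfun (J : ℝ → ℝ) (x y : ℝ) : ℝ :=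
  if y ≤ x then J (y / 2) - (y / (2 * x)) * J x else J (y / 2) - (y / (2 * (1 - x))) * J x


/-!
Log-concavity of the density makes the isoperimetric profile `J = f ∘ F⁻¹` concave. For
`t₁ < t₂ < t₃`, comparing `f` on `[t₁, t₂]` and on `[t₂, t₃]` with `exp` of the chord of `log f`
through `t₂, t₃` (this chord lies above `log f` left of `t₂` and below it on `[t₂, t₃]`) gives
`(f t₃ - f t₂) ∫_{t₁}^{t₂} f ≤ (f t₂ - f t₁) ∫_{t₂}^{t₃} f`, which is the slope inequality for `J`
at `F t₁ < F t₂ < F t₃`. Evenness of `f` gives `J (1 - r) = J r`.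

Then `K_μ(x, y) + J x = J a + J (s - a)` with `a = y / 2`, where `s = x` for `y ≤ x` and, by the
symmetry, `s = 1 - x` for `y > x`; by concavity such a sum increases as `a` moves towards `s / 2`.
The two branches are joined through `2 J (x / 2) ≤ J (x / 2) + J (1 - 3x / 2)`.
-/

open Real

theorem integral_exp_mul_add {σ : ℝ} (hσ : σ ≠ 0) (d a b : ℝ) :
    ∫ u in a..b, exp (σ * u + d) = (exp (σ * b + d) - exp (σ * a + d)) / σ := by
  rw [intervalIntegral.integral_comp_mul_add (fun u => exp u) hσ, integral_exp, smul_eq_mul,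
    inv_mul_eq_div]

section LogConcave

variable {g : ℝ → ℝ} {t₁ t₂ t₃ : ℝ}

theorem sub_mul_integral_exp_le_of_lt (h₁₂ : t₁ < t₂) (h₂₃ : t₂ < t₃)
    (hg : ConcaveOn ℝ (Icc t₁ t₃) g) (hgc : ContinuousOn g (Icc t₁ t₃)) (hlt : g t₂ < g t₃) :
    (exp (g t₃) - exp (g t₂)) * ∫ u in t₁..t₂, exp (g u) ≤
      (exp (g t₂) - exp (g t₁)) * ∫ u in t₂..t₃, exp (g u) := by
  have m₂ : t₂ ∈ Icc t₁ t₃ := ⟨h₁₂.le, h₂₃.le⟩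
  have m₃ : t₃ ∈ Icc t₁ t₃ := ⟨(h₁₂.trans h₂₃).le, le_rfl⟩
  set σ := (g t₃ - g t₂) / (t₃ - t₂)
  have hσ : 0 < σ := div_pos (by linarith) (by linarith)
  set E : ℝ → ℝ := fun u => exp (σ * u + (g t₂ - σ * t₂))
  have hslope : ∀ u ∈ Icc t₁ t₃, u ≠ t₂ → σ ≤ (g u - g t₂) / (u - t₂) := fun u hu hne => by
    simpa only [slope_def_field] using
      hg.slope_anti m₂ ⟨hu, hne⟩ ⟨m₃, h₂₃.ne'⟩ hu.2
  have hE₂ : E t₂ = exp (g t₂) := by simp only [E]; ring_nf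
  have hE₃ : E t₃ = exp (g t₃) := by
    have : t₃ - t₂ ≠ 0 := by linarith
    simp only [E, σ]; congr 1; field_simp; ring
  have hupper : ∀ u ∈ Icc t₁ t₂, exp (g u) ≤ E u := fun u hu => by
    rcases hu.2.lt_or_eq with hlt | rfl
    · have := hslope u ⟨hu.1, hu.2.trans h₂₃.le⟩ hlt.ne
      rw [le_div_iff_of_neg (by linarith)] at this
      exact exp_le_exp.2 (by linarith)
    · exact hE₂.ge
  have hlower : ∀ u ∈ Icc t₂ t₃, E u ≤ exp (g u) := fun u hu => by
    rcases hu.1.lt_or_eq with hlt | rfl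
    · have := hslope u ⟨h₁₂.le.trans hu.1, hu.2⟩ hlt.ne'
      rw [le_div_iff₀ (by linarith)] at this
      exact exp_le_exp.2 (by linarith)
    · exact hE₂.le
  have hcont : Continuous E := by fun_prop
  have hint {a b} (hab : a ≤ b) (hsub : Icc a b ⊆ Icc t₁ t₃) :
      IntervalIntegrable (fun u => exp (g u)) volume a b :=
    ((continuous_exp.comp_continuousOn hgc).mono hsub).intervalIntegrable_of_Icc hab
  have hA₁ : ∫ u in t₁..t₂, exp (g u) ≤ (E t₂ - E t₁) / σ := by
    rw [← integral_exp_mul_add hσ.ne']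
    exact intervalIntegral.integral_mono_on h₁₂.le (hint h₁₂.le (Icc_subset_Icc_right h₂₃.le))
      (hcont.intervalIntegrable _ _) hupper
  have hA₂ : (E t₃ - E t₂) / σ ≤ ∫ u in t₂..t₃, exp (g u) := by
    rw [← integral_exp_mul_add hσ.ne']
    exact intervalIntegral.integral_mono_on h₂₃.le (hcont.intervalIntegrable _ _)
      (hint h₂₃.le (Icc_subset_Icc_left h₁₂.le)) hlower
  have hE₁₂ : E t₁ ≤ E t₂ := exp_le_exp.2 (by nlinarith)
  have hE₂₃ : E t₂ ≤ E t₃ := exp_le_exp.2 (by nlinarith)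
  have hf₁ : exp (g t₁) ≤ E t₁ := hupper t₁ ⟨le_rfl, h₁₂.le⟩
  rw [← hE₂, ← hE₃]
  calc (E t₃ - E t₂) * ∫ u in t₁..t₂, exp (g u)
      ≤ (E t₃ - E t₂) * ((E t₂ - E t₁) / σ) := by gcongr
    _ = (E t₂ - E t₁) * ((E t₃ - E t₂) / σ) := by ring
    _ ≤ (E t₂ - E t₁) * ∫ u in t₂..t₃, exp (g u) := by gcongr
    _ ≤ (E t₂ - exp (g t₁)) * ∫ u in t₂..t₃, exp (g u) := by
        gcongr
        exact (div_nonneg (by linarith) hσ.le).trans hA₂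

theorem ConcaveOn.comp_neg_Icc (hg : ConcaveOn ℝ (Icc t₁ t₃) g) :
    ConcaveOn ℝ (Icc (-t₃) (-t₁)) (fun u => g (-u)) := by
  refine ⟨convex_Icc _ _, fun x hx y hy a b ha hb hab => ?_⟩
  have := hg.2 (x := -x) ⟨le_neg.2 hx.2, neg_le.2 hx.1⟩ (y := -y) ⟨le_neg.2 hy.2, neg_le.2 hy.1⟩
    ha hb hab
  simpa [smul_neg, neg_add, add_comm] using this

theorem sub_mul_integral_exp_le (h₁₂ : t₁ < t₂) (h₂₃ : t₂ < t₃)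
    (hg : ConcaveOn ℝ (Icc t₁ t₃) g) (hgc : ContinuousOn g (Icc t₁ t₃)) :
    (exp (g t₃) - exp (g t₂)) * ∫ u in t₁..t₂, exp (g u) ≤
      (exp (g t₂) - exp (g t₁)) * ∫ u in t₂..t₃, exp (g u) := by
  have hA₁ : 0 ≤ ∫ u in t₁..t₂, exp (g u) :=
    intervalIntegral.integral_nonneg h₁₂.le fun u _ => (exp_pos _).le
  have hA₂ : 0 ≤ ∫ u in t₂..t₃, exp (g u) :=
    intervalIntegral.integral_nonneg h₂₃.le fun u _ => (exp_pos _).le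
  rcases lt_or_ge (g t₂) (g t₃) with h₂₃' | h₃₂
  · exact sub_mul_integral_exp_le_of_lt h₁₂ h₂₃ hg hgc h₂₃'
  rcases lt_or_ge (g t₂) (g t₁) with h₂₁ | h₁₂'
  · have hneg : MapsTo (fun u : ℝ => -u) (Icc (-t₃) (-t₁)) (Icc t₁ t₃) := fun u hu =>
      ⟨le_neg.2 hu.2, neg_le.2 hu.1⟩
    have := sub_mul_integral_exp_le_of_lt (neg_lt_neg h₂₃) (neg_lt_neg h₁₂) hg.comp_neg_Icc
      (hgc.comp continuous_neg.continuousOn hneg) (by simpa using h₂₁)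
    simp only [neg_neg, intervalIntegral.integral_comp_neg (fun u => exp (g u))] at this
    linarith
  · have h₃ : exp (g t₃) ≤ exp (g t₂) := exp_le_exp.2 h₃₂
    have h₁ : exp (g t₁) ≤ exp (g t₂) := exp_le_exp.2 h₁₂'
    nlinarith

theorem sub_mul_integral_le_of_concaveOn_log {f : ℝ → ℝ} (h₁₂ : t₁ < t₂) (h₂₃ : t₂ < t₃)
    (hpos : ∀ u ∈ Icc t₁ t₃, 0 < f u) (hf : ContinuousOn f (Icc t₁ t₃))
    (hlog : ConcaveOn ℝ (Icc t₁ t₃) fun u => log (f u)) :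
    (f t₃ - f t₂) * ∫ u in t₁..t₂, f u ≤ (f t₂ - f t₁) * ∫ u in t₂..t₃, f u := by
  have hexp : EqOn (fun u => exp (log (f u))) f (Icc t₁ t₃) := fun u hu => exp_log (hpos u hu)
  have key := sub_mul_integral_exp_le h₁₂ h₂₃ hlog (hf.log fun u hu => (hpos u hu).ne')
  rwa [intervalIntegral.integral_congr (hexp.mono ?_),
    intervalIntegral.integral_congr (hexp.mono ?_), exp_log (hpos t₁ ⟨le_rfl, (h₁₂.trans h₂₃).le⟩),
    exp_log (hpos t₂ ⟨h₁₂.le, h₂₃.le⟩), exp_log (hpos t₃ ⟨(h₁₂.trans h₂₃).le, le_rfl⟩)] at key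
  · rw [uIcc_of_le h₂₃.le]; exact Icc_subset_Icc_left h₁₂.le
  · rw [uIcc_of_le h₁₂.le]; exact Icc_subset_Icc_right h₂₃.le

end LogConcave

theorem ConcaveOn.add_le_add_sub {φ : ℝ → ℝ} {a b c : ℝ} (hφ : ConcaveOn ℝ (Icc a b) φ)
    (hc : c ∈ Icc a b) : φ a + φ b ≤ φ c + φ (a + b - c) := by
  rcases hc.1.eq_or_lt with rfl | hac
  · simp
  have hab : 0 < b - a := by linarith [hc.2]
  have hne : b - a ≠ 0 := hab.ne'
  have ha : a ∈ Icc a b := ⟨le_rfl, hac.le.trans hc.2⟩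
  have hb : b ∈ Icc a b := ⟨hac.le.trans hc.2, le_rfl⟩
  have hsum : (b - c) / (b - a) + (c - a) / (b - a) = 1 := by field_simp; ring
  have hθ : 0 ≤ (b - c) / (b - a) := div_nonneg (by linarith [hc.2]) hab.le
  have hθ' : 0 ≤ (c - a) / (b - a) := div_nonneg (by linarith) hab.le
  have h₁ := hφ.2 ha hb hθ hθ' hsum
  have h₂ := hφ.2 ha hb hθ' hθ (by rw [add_comm, hsum])
  have e₁ : ((b - c) / (b - a)) • a + ((c - a) / (b - a)) • b = c := by
    simp only [smul_eq_mul]; field_simp; ring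
  have e₂ : ((c - a) / (b - a)) • a + ((b - c) / (b - a)) • b = a + b - c := by
    simp only [smul_eq_mul]; field_simp; ring
  rw [e₁] at h₁
  rw [e₂] at h₂
  simp only [smul_eq_mul] at h₁ h₂
  have : ((b - c) / (b - a) + (c - a) / (b - a)) * (φ a + φ b) = φ a + φ b := by
    rw [hsum, one_mul]
  linarith

namespace LogConcaveSetup

variable (S : LogConcaveSetup)

instance : IsProbabilityMeasure (densMeasure S.f) := S.hprob

instance : NullSingletonClass (densMeasure S.f) := by
  unfold densMeasure; infer_instance

def posSet : Set ℝ := {x | 0 < S.f x}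

theorem posSet_eq : S.posSet = {x | ENNReal.ofReal |x| < S.b₀} := by
  ext x; exact S.hf_pos x

theorem isOpen_posSet : IsOpen S.posSet := by
  rw [posSet_eq]
  exact isOpen_lt (ENNReal.continuous_ofReal.comp continuous_abs) continuous_const

instance : S.posSet.OrdConnected := by
  rw [posSet_eq]
  exact ⟨fun x hx y hy z hz => (ENNReal.ofReal_le_ofReal (abs_le_max_abs_abs hz.1 hz.2)).trans_lt
    (by rw [ENNReal.ofReal_max]; exact max_lt hx hy)⟩

theorem neg_mem_posSet {x : ℝ} (hx : x ∈ S.posSet) : -x ∈ S.posSet := by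
  simpa [posSet, S.hf_even] using hx

theorem continuousOn_f : ContinuousOn S.f S.posSet :=
  (S.hf_logConcave.continuousOn S.isOpen_posSet).rexp.congr fun _ hx => (Real.exp_log hx).symm

theorem measure_posSet_compl : densMeasure S.f S.posSetᶜ = 0 := by
  rw [densMeasure, withDensity_apply_eq_zero' S.hf_meas.ennreal_ofReal.aemeasurable]
  convert measure_empty (μ := volume)
  ext x
  simp [posSet]

noncomputable def cdf (t : ℝ) : ℝ := (densMeasure S.f).real (Iic t)

theorem cdf_mono : Monotone S.cdf := fun _ _ h => measureReal_mono (Iic_subset_Iic.2 h)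

theorem cdf_Finv {r : ℝ} (hr : r ∈ Ioo 0 1) : S.cdf (S.Finv r) = r := S.hFinv r hr

theorem cdf_sub_cdf {s t : ℝ} (hst : s ≤ t) (hs : s ∈ S.posSet) (ht : t ∈ S.posSet) :
    S.cdf t - S.cdf s = ∫ u in s..t, S.f u := by
  have hsub : Ioc s t ⊆ S.posSet := fun u hu => Set.Icc_subset _ hs ht ⟨hu.1.le, hu.2⟩
  rw [cdf, cdf, ← Iic_union_Ioc_eq_Iic hst,
    measureReal_union (Iic_disjoint_Ioc le_rfl) measurableSet_Ioc, add_sub_cancel_left,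
    intervalIntegral.integral_of_le hst, measureReal_def, densMeasure,
    withDensity_apply _ measurableSet_Ioc, integral_eq_lintegral_of_nonneg_ae]
  · exact (ae_restrict_iff' measurableSet_Ioc).2 (ae_of_all _ fun u hu => (hsub hu).le)
  · exact S.hf_meas.aestronglyMeasurable

theorem cdf_strictMonoOn : StrictMonoOn S.cdf S.posSet := fun s hs t ht hst => by
  have hsub : Icc s t ⊆ S.posSet := Set.Icc_subset _ hs ht
  rw [← sub_pos, S.cdf_sub_cdf hst.le hs ht]
  exact intervalIntegral.intervalIntegral_pos_of_pos_on
    ((S.continuousOn_f.mono hsub).intervalIntegrable_of_Icc hst.le)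
    (fun u hu => hsub (Ioo_subset_Icc_self hu)) hst

theorem measure_Iic_neg (t : ℝ) : densMeasure S.f (Iic (-t)) = densMeasure S.f (Ici t) := by
  rw [densMeasure, withDensity_apply _ measurableSet_Iic, withDensity_apply _ measurableSet_Ici,
    ← lintegral_indicator measurableSet_Iic, ← lintegral_indicator measurableSet_Ici,
    ← lintegral_neg_eq_self]
  congr 1; ext x
  simp [indicator, S.hf_even]

theorem cdf_neg (t : ℝ) : S.cdf (-t) = 1 - S.cdf t := by
  rw [cdf, measureReal_def, measure_Iic_neg, measure_congr Ioi_ae_eq_Ici.symm, ← measureReal_def,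
    ← compl_Iic, probReal_compl_eq_one_sub measurableSet_Iic, cdf]

theorem Finv_mem_posSet {r : ℝ} (hr : r ∈ Ioo 0 1) : S.Finv r ∈ S.posSet := by
  by_contra hnot
  rcases le_total (S.Finv r) 0 with hle | hge
  · have : Iic (S.Finv r) ⊆ S.posSetᶜ := fun z hz hzs =>
      hnot (Set.Icc_subset _ hzs (S.neg_mem_posSet hzs) ⟨hz, by linarith [mem_Iic.1 hz]⟩)
    have h0 := S.cdf_Finv hr
    rw [cdf, measureReal_def, measure_mono_null this S.measure_posSet_compl] at h0
    exact hr.1.ne h0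
  · have : Ioi (S.Finv r) ⊆ S.posSetᶜ := fun z hz hzs =>
      hnot (Set.Icc_subset _ (S.neg_mem_posSet hzs) hzs ⟨by linarith [mem_Ioi.1 hz], hz.le⟩)
    have h1 := S.cdf_Finv hr
    rw [cdf, ← compl_Ioi, probReal_compl_eq_one_sub measurableSet_Ioi, measureReal_def,
      measure_mono_null this S.measure_posSet_compl] at h1
    norm_num at h1
    exact hr.2.ne h1.symm

theorem Finv_one_sub {r : ℝ} (hr : r ∈ Ioo 0 1) : S.Finv (1 - r) = -S.Finv r := by
  have hr' : 1 - r ∈ Ioo 0 1 := ⟨by linarith [hr.2], by linarith [hr.1]⟩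
  refine S.cdf_strictMonoOn.injOn (S.Finv_mem_posSet hr')
    (S.neg_mem_posSet (S.Finv_mem_posSet hr)) ?_
  rw [S.cdf_Finv hr', cdf_neg, S.cdf_Finv hr]

theorem J_one_sub {r : ℝ} (hr : r ∈ Ioo 0 1) : S.J (1 - r) = S.J r := by
  rw [S.hJ _ ⟨by linarith [hr.2], by linarith [hr.1]⟩, S.hJ r hr, S.Finv_one_sub hr, S.hf_even]

theorem concaveOn_J : ConcaveOn ℝ (Ioo 0 1) S.J := by
  refine concaveOn_of_slope_anti_adjacent (convex_Ioo 0 1) fun {r₁ r₂ r₃} h₁ h₃ h₁₂ h₂₃ => ?_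
  have h₂ : r₂ ∈ Ioo (0 : ℝ) 1 := ⟨h₁.1.trans h₁₂, h₂₃.trans h₃.2⟩
  have m₁ := S.Finv_mem_posSet h₁
  have m₂ := S.Finv_mem_posSet h₂
  have m₃ := S.Finv_mem_posSet h₃
  have ht₁₂ : S.Finv r₁ < S.Finv r₂ :=
    S.cdf_mono.reflect_lt (by rwa [S.cdf_Finv h₁, S.cdf_Finv h₂])
  have ht₂₃ : S.Finv r₂ < S.Finv r₃ :=
    S.cdf_mono.reflect_lt (by rwa [S.cdf_Finv h₂, S.cdf_Finv h₃])
  have hA₁ := S.cdf_sub_cdf ht₁₂.le m₁ m₂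
  have hA₂ := S.cdf_sub_cdf ht₂₃.le m₂ m₃
  rw [S.cdf_Finv h₁, S.cdf_Finv h₂] at hA₁
  rw [S.cdf_Finv h₂, S.cdf_Finv h₃] at hA₂
  have hsub : Icc (S.Finv r₁) (S.Finv r₃) ⊆ S.posSet := Set.Icc_subset _ m₁ m₃
  have key := sub_mul_integral_le_of_concaveOn_log ht₁₂ ht₂₃ (fun u hu => hsub hu)
    (S.continuousOn_f.mono hsub) (S.hf_logConcave.subset hsub (convex_Icc _ _))
  rw [← hA₁, ← hA₂, ← S.hJ r₁ h₁, ← S.hJ r₂ h₂, ← S.hJ r₃ h₃] at key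
  rw [div_le_div_iff₀ (by linarith) (by linarith)]
  linarith

theorem J_add_J_sub_le {s a c : ℝ} (ha : 0 < a) (hac : a ≤ c) (hcs : 2 * c ≤ s)
    (hs : s - a < 1) : S.J a + S.J (s - a) ≤ S.J c + S.J (s - c) := by
  have hsub : Icc a (s - a) ⊆ Ioo 0 1 := fun u hu => ⟨ha.trans_le hu.1, hu.2.trans_lt hs⟩
  have := (S.concaveOn_J.subset hsub (convex_Icc _ _)).add_le_add_sub
    (c := c) ⟨hac, by linarith⟩
  rwa [add_sub_cancel] at this

theorem J_le_J_of_mem_Icc {w u : ℝ} (hw : w ∈ Ioo 0 1) (hu : u ∈ Icc w (1 - w)) :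
    S.J w ≤ S.J u := by
  have hw' : 1 - w ∈ Ioo 0 1 := ⟨by linarith [hw.2], by linarith [hw.1]⟩
  simpa [S.J_one_sub hw] using S.concaveOn_J.min_le_of_mem_Icc hw hw' hu

theorem Kfun_eq_of_lt {x y : ℝ} (hxy : x < y) (hx : x + y / 2 ∈ Ioo 0 1) :
    Kfun S.J x y = S.J (y / 2) + S.J (1 - x - y / 2) - S.J x := by
  rw [Kfun, if_neg hxy.not_ge, ← S.J_one_sub hx, ← sub_sub]
  ring

end LogConcaveSetup

theorem Kfun_eq_of_le {J : ℝ → ℝ} {x y : ℝ} (hyx : y ≤ x) :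
    Kfun J x y = J (y / 2) + J (x - y / 2) - J x := by
  rw [Kfun, if_pos hyx]
  ring

theorem Kfun_monotone_general (S : LogConcaveSetup) (x : ℝ) :
    MonotoneOn (fun y => Kfun S.J x y) (Ioc (0:ℝ) (min (2 * x) (1 - x))) := by
  rintro y₁ ⟨hy₁, hy₁'⟩ y₂ ⟨hy₂, hy₂'⟩ h
  rw [le_min_iff] at hy₁' hy₂'
  dsimp only
  rcases le_or_gt y₂ x with hy₂x | hxy₂
  · rw [Kfun_eq_of_le hy₂x, Kfun_eq_of_le (h.trans hy₂x)]
    linarith [S.J_add_J_sub_le (s := x) (c := y₂ / 2) (half_pos hy₁) (by linarith) (by linarith)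
      (by linarith)]
  rw [S.Kfun_eq_of_lt hxy₂ ⟨by linarith, by linarith⟩]
  rcases le_or_gt y₁ x with hy₁x | hxy₁
  · rw [Kfun_eq_of_le hy₁x]
    have h₁ := S.J_add_J_sub_le (s := x) (c := x / 2) (half_pos hy₁) (by linarith) (by linarith)
      (by linarith)
    have h₂ := S.J_add_J_sub_le (s := 1 - x) (c := y₂ / 2) (a := x / 2) (by linarith)
      (by linarith) (by linarith) (by linarith)
    have h₃ := S.J_le_J_of_mem_Icc (w := x / 2) (u := 1 - x - x / 2) ⟨by linarith, by linarith⟩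
      ⟨by linarith, by linarith⟩
    rw [sub_half] at h₁
    linarith
  · rw [S.Kfun_eq_of_lt hxy₁ ⟨by linarith, by linarith⟩]
    linarith [S.J_add_J_sub_le (s := 1 - x) (c := y₂ / 2) (half_pos hy₁) (by linarith)
      (by linarith) (by linarith)]

/-- For fixed `0 < x ≤ 1/2`, the isoperimetric deficit function `y ↦ K_μ(x, y)` is
nondecreasing on `(0, min (2x) (1-x)]`. -/
theorem Kfun_monotone (S : LogConcaveSetup) (x : ℝ) (hx0 : 0 < x) (hx : x ≤ 1 / 2) :
    MonotoneOn (fun y => Kfun S.J x y) (Ioc (0:ℝ) (min (2 * x) (1 - x))) :=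
  Kfun_monotone_general S x
end
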